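/- (Purification Bound, initialization) Let l be a branch. If l has at least one unused feature, then for every policy π, V^π(l) ≤ max{ H(l), −λ + n(l)/n }; in particular V*(l) ≤ max{ H(l), −λ + n(l)/n }. If l has no unused feature (splits(l) = q), then V^π(l) = H(l) for every policy π. -/

import Mathlib

open Finset

/-- A branch: for each feature, either unused (`none`) or fixed to a category. -/
abbrev Branch (q : ℕ) (C : Fin q → ℕ) : Type := ∀ i : Fin q, Option (Fin (C i))

/-- States: `Sum.inl l` is the (non-terminal) branch `l`, `Sum.inr l` is its terminal state `l̄`. -/
abbrev BState (q : ℕ) (C : Fin q → ℕ) : Type := Branch q C ⊕ Branch q C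

/-- The root branch `Ω`. -/
def root (q : ℕ) (C : Fin q → ℕ) : Branch q C := fun _ => none

/-- The child of `l` obtained by fixing unused feature `i` to category `j`. -/
def child {q : ℕ} {C : Fin q → ℕ} (l : Branch q C) (i : Fin q) (j : Fin (C i)) : Branch q C :=
  Function.update l i (some j)

/-- `Children(l, i)`. -/
def childrenF {q : ℕ} {C : Fin q → ℕ} (l : Branch q C) (i : Fin q) : Finset (Branch q C) :=
  Finset.univ.image (fun j : Fin (C i) => child l i j)

/-- A policy: `act l = none` is the terminal action `ā`, `act l = some i` splits on the
unused feature `i`. -/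
structure Policy (q : ℕ) (C : Fin q → ℕ) where
  act : Branch q C → Option (Fin q)
  valid : ∀ l i, act l = some i → l i = none

/-- Transition set of the action taken by `π` at branch `l`. -/
def stepSet {q : ℕ} {C : Fin q → ℕ} (π : Policy q C) (l : Branch q C) : Finset (BState q C) :=
  match π.act l with
  | none => {Sum.inr l}
  | some i => (childrenF l i).image Sum.inl

/-- Trajectory of policy `π` from branch `l`. -/
def traj {q : ℕ} {C : Fin q → ℕ} (π : Policy q C) (l : Branch q C) : ℕ → Finset (BState q C)
  | 0 => {Sum.inl l}
  | t + 1 => (traj π l t).biUnion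
      (fun s => Sum.elim (fun lu => stepSet π lu) (fun lu => ({Sum.inr lu} : Finset (BState q C))) s)

/-- `τ_l^π`: minimal time `t ≥ 1` at which the trajectory consists of terminal states only. -/
noncomputable def tau {q : ℕ} {C : Fin q → ℕ} (π : Policy q C) (l : Branch q C) : ℕ :=
  sInf {t : ℕ | 1 ≤ t ∧ ∀ x ∈ traj π l t, x.isRight}

/-- A data point `x` is in branch `l`. -/
def inBranch {q : ℕ} {C : Fin q → ℕ} (l : Branch q C) (x : ∀ i : Fin q, Fin (C i)) : Prop :=
  ∀ (i : Fin q) (c : Fin (C i)), l i = some c → x i = c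

instance {q : ℕ} {C : Fin q → ℕ} (l : Branch q C) (x : ∀ i, Fin (C i)) :
    Decidable (inBranch l x) := by unfold inBranch; infer_instance

/-- `n(l)`: number of data points in `l`. -/
def nIn {q K : ℕ} {C : Fin q → ℕ} (D : Multiset ((∀ i : Fin q, Fin (C i)) × Fin K))
    (l : Branch q C) : ℕ :=
  (D.filter (fun p => inBranch l p.1)).card

/-- `n_k(l)`: number of data points in `l` of class `k`. -/
def nk {q K : ℕ} {C : Fin q → ℕ} (D : Multiset ((∀ i : Fin q, Fin (C i)) × Fin K))
    (l : Branch q C) (k : Fin K) : ℕ :=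
  (D.filter (fun p => inBranch l p.1 ∧ p.2 = k)).card

/-- `H(l) = (max_k n_k(l)) / n`. -/
noncomputable def Hb {q K : ℕ} {C : Fin q → ℕ} (D : Multiset ((∀ i : Fin q, Fin (C i)) × Fin K))
    (l : Branch q C) : ℝ :=
  ((Finset.univ.sup (fun k : Fin K => nk D l k) : ℕ) : ℝ) / (Multiset.card D : ℝ)

/-- Reward collected at a state of the trajectory: `H(l)` for the terminal action,
`-λ` for a split action, `0` at terminal states. -/
noncomputable def rew {q K : ℕ} {C : Fin q → ℕ}
    (D : Multiset ((∀ i : Fin q, Fin (C i)) × Fin K)) (lam : ℝ) (π : Policy q C) :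
    BState q C → ℝ
  | Sum.inl lu => match π.act lu with
      | none => Hb D lu
      | some _ => -lam
  | Sum.inr _ => 0

/-- Value `V^π(l)`. -/
noncomputable def V {q K : ℕ} {C : Fin q → ℕ}
    (D : Multiset ((∀ i : Fin q, Fin (C i)) × Fin K)) (lam : ℝ)
    (π : Policy q C) (l : Branch q C) : ℝ :=
  ∑ t ∈ Finset.range (tau π l), ∑ x ∈ traj π l t, rew D lam π x

/-- State-action value `Q^π(l, a)`. -/
noncomputable def Qv {q K : ℕ} {C : Fin q → ℕ}
    (D : Multiset ((∀ i : Fin q, Fin (C i)) × Fin K)) (lam : ℝ)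
    (π : Policy q C) (l : Branch q C) : Option (Fin q) → ℝ
  | none => Hb D l
  | some i => -lam + ∑ j : Fin (C i), V D lam π (child l i j)

/-- The available actions `A(l)`. -/
def Avail {q : ℕ} {C : Fin q → ℕ} (l : Branch q C) : Finset (Option (Fin q)) :=
  insert none ((Finset.univ.filter (fun i : Fin q => l i = none)).image some)

theorem Avail_nonempty {q : ℕ} {C : Fin q → ℕ} (l : Branch q C) : (Avail l).Nonempty :=
  ⟨none, Finset.mem_insert_self _ _⟩

/-- The sub-DT of `π` rooted in `l`: the branches whose terminal states constitute
the trajectory at time `τ_l^π`. -/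
noncomputable def subDTof {q : ℕ} {C : Fin q → ℕ} (π : Policy q C) (l : Branch q C) : Finset (Branch q C) :=
  (traj π l (tau π l)).image (Sum.elim id id)

/-- `SubDT l T m`: `T` is a sub-DT rooted in `l` obtained by `m` split operations. -/
inductive SubDT {q : ℕ} {C : Fin q → ℕ} : Branch q C → Finset (Branch q C) → ℕ → Prop
  | leaf (l : Branch q C) : SubDT l {l} 0
  | split (l : Branch q C) (T : Finset (Branch q C)) (m : ℕ) (l' : Branch q C) (i : Fin q)
      (hT : SubDT l T m) (hmem : l' ∈ T) (hnone : l' i = none) :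
      SubDT l (T.erase l' ∪ childrenF l' i) (m + 1)

/-- `H(T) = ∑_{l ∈ T} H(l)`. -/
noncomputable def HT {q K : ℕ} {C : Fin q → ℕ}
    (D : Multiset ((∀ i : Fin q, Fin (C i)) × Fin K)) (T : Finset (Branch q C)) : ℝ :=
  ∑ l ∈ T, Hb D l

/-- `splits(l)`: number of features used by branch `l`. -/
def nsplits {q : ℕ} {C : Fin q → ℕ} (l : Branch q C) : ℕ :=
  (Finset.univ.filter (fun i : Fin q => l i ≠ none)).card

/-!
A terminal action earns `H(l)`; a split on feature `i` earns `-λ` plus the values of the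
children (the trajectories of the children are disjoint and all trajectories stop within `q + 1`
steps). Since `λ ≥ 0` and the children partition the data in `l`, induction on the number of
unused features gives `V^π(l') ≤ n(l')/n` for every branch `l'`, hence `V^π(l) ≤ -λ + n(l)/n`
after a split. A branch without unused features only admits the terminal action.
-/

section

variable {q K : ℕ} {C : Fin q → ℕ}

section Branches

@[simp]
lemma child_apply_self (l : Branch q C) (i : Fin q) (j : Fin (C i)) :
    child l i j i = some j := by
  simp [child]

lemma child_apply_of_ne (l : Branch q C) {i i' : Fin q} (h : i' ≠ i) (j : Fin (C i)) :
    child l i j i' = l i' :=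
  Function.update_of_ne h _ _

lemma nsplits_lt_of_eq_none {l : Branch q C} {i : Fin q} (h : l i = none) : nsplits l < q := by
  simpa [nsplits] using card_lt_card (filter_ssubset.mpr ⟨i, mem_univ i, by simp [h]⟩)

lemma nsplits_le (l : Branch q C) : nsplits l ≤ q := by
  simpa [nsplits] using card_filter_le univ fun i : Fin q => l i ≠ none

lemma nsplits_child {l : Branch q C} {i : Fin q} (h : l i = none) (j : Fin (C i)) :
    nsplits (child l i j) = nsplits l + 1 := by
  have hset : univ.filter (fun i' => child l i j i' ≠ none)
      = insert i (univ.filter fun i' => l i' ≠ none) := by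
    ext i'
    by_cases hi' : i' = i
    · subst hi'; simp
    · simp [child_apply_of_ne l hi', hi']
  rw [nsplits, hset, card_insert_of_notMem (by simp [h]), nsplits]

end Branches

section Trajectories

variable (π : Policy q C)

lemma mem_stepSet {lu : Branch q C} {s : BState q C} :
    s ∈ stepSet π lu ↔
      (π.act lu = none ∧ s = .inr lu) ∨ ∃ i j, π.act lu = some i ∧ s = .inl (child lu i j) := by
  unfold stepSet
  cases π.act lu <;> simp [childrenF, eq_comm]

abbrev BState.branch : BState q C → Branch q C := Sum.elim id id

lemma mem_traj_succ {l : Branch q C} {t : ℕ} {s : BState q C} :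
    s ∈ traj π l (t + 1) ↔ (∃ lu, .inl lu ∈ traj π l t ∧ s ∈ stepSet π lu) ∨
      ∃ lu, .inr lu ∈ traj π l t ∧ s = .inr lu := by
  simp only [traj, mem_biUnion, Sum.exists, Sum.elim_inl, Sum.elim_inr, mem_singleton]

lemma traj_branch_eq_some {l : Branch q C} {i : Fin q} {c : Fin (C i)} (hc : l i = some c) :
    ∀ t, ∀ s ∈ traj π l t, s.branch i = some c
  | 0, s, hs => by simp_all [traj]
  | t + 1, s, hs => by
    rcases (mem_traj_succ π).mp hs with ⟨lu, hlu, hs⟩ | ⟨lu, hlu, rfl⟩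
    · have ih : lu i = some c := traj_branch_eq_some hc t _ hlu
      rcases (mem_stepSet π).mp hs with ⟨-, rfl⟩ | ⟨i', j, hact, rfl⟩
      · exact ih
      · have hne : i ≠ i' := by rintro rfl; simp [π.valid lu i hact] at ih
        simpa [child_apply_of_ne lu hne] using ih
    · exact traj_branch_eq_some hc t _ hlu

lemma nsplits_of_inl_mem_traj {l : Branch q C} :
    ∀ t, ∀ lu, .inl lu ∈ traj π l t → nsplits lu = nsplits l + t
  | 0, lu, h => by simp_all [traj]
  | t + 1, lu, h => by
    rcases (mem_traj_succ π).mp h with ⟨lv, hlv, hs⟩ | ⟨lv, -, hs⟩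
    · rcases (mem_stepSet π).mp hs with ⟨-, hs⟩ | ⟨i, j, hact, hs⟩
      · cases hs
      · cases hs
        rw [nsplits_child (π.valid lv i hact), nsplits_of_inl_mem_traj t lv hlv, add_assoc]
    · cases hs

lemma isRight_of_mem_traj_q_succ (l : Branch q C) : ∀ s ∈ traj π l (q + 1), s.isRight
  | .inl lu, h => by
    have := nsplits_of_inl_mem_traj π (q + 1) lu h
    have := nsplits_le lu
    omega
  | .inr _, _ => rfl

lemma tau_le_q_succ (l : Branch q C) : tau π l ≤ q + 1 :=
  Nat.sInf_le ⟨by omega, isRight_of_mem_traj_q_succ π l⟩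

lemma traj_succ_of_forall_isRight {l : Branch q C} {t : ℕ} (h : ∀ s ∈ traj π l t, s.isRight) :
    traj π l (t + 1) = traj π l t := by
  ext s
  rw [mem_traj_succ]
  constructor
  · rintro (⟨lu, hlu, -⟩ | ⟨lu, hlu, rfl⟩)
    · simpa using h _ hlu
    · exact hlu
  · intro hs
    cases s with
    | inl lu => simpa using h _ hs
    | inr lu => exact .inr ⟨lu, hs, rfl⟩

lemma isRight_of_mem_traj_of_tau_le {l : Branch q C} {t : ℕ} (ht : tau π l ≤ t) :
    ∀ s ∈ traj π l t, s.isRight := by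
  induction t, ht using Nat.le_induction with
  | base => exact (Nat.sInf_mem (⟨q + 1, by omega, isRight_of_mem_traj_q_succ π l⟩ :
      {t | 1 ≤ t ∧ ∀ s ∈ traj π l t, s.isRight}.Nonempty)).2
  | succ t _ ih => rwa [traj_succ_of_forall_isRight π ih]

lemma traj_succ_of_act_eq_some {l : Branch q C} {i : Fin q} (hact : π.act l = some i) (t : ℕ) :
    traj π l (t + 1) = univ.biUnion fun j => traj π (child l i j) t := by
  induction t with
  | zero => ext s; simp [traj, stepSet, hact, childrenF, eq_comm]
  | succ t ih => rw [traj, ih, biUnion_biUnion]; rfl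

end Trajectories

section Value

variable (D : Multiset ((∀ i : Fin q, Fin (C i)) × Fin K)) (lam : ℝ) (π : Policy q C)

lemma V_eq_sum_range {l : Branch q C} {T : ℕ} (hT : tau π l ≤ T) :
    V D lam π l = ∑ t ∈ range T, ∑ s ∈ traj π l t, rew D lam π s := by
  refine sum_subset (range_subset_range.mpr hT) fun t hT ht => sum_eq_zero fun s hs => ?_
  have := isRight_of_mem_traj_of_tau_le π (not_lt.mp (mem_range.not.mp ht)) s hs
  cases s with
  | inl lu => simp at this
  | inr lu => rfl

lemma V_of_act_eq_none {l : Branch q C} (hact : π.act l = none) : V D lam π l = Hb D l := by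
  have hτ : tau π l ≤ 1 := Nat.sInf_le ⟨le_rfl, by simp [traj, stepSet, hact]⟩
  simp [V_eq_sum_range D lam π hτ, traj, rew, hact]

lemma V_of_act_eq_some {l : Branch q C} {i : Fin q} (hact : π.act l = some i) :
    V D lam π l = -lam + ∑ j : Fin (C i), V D lam π (child l i j) := by
  -- the children's trajectories are disjoint since their states carry different values at `i`
  have hdisj (t : ℕ) :
      Set.PairwiseDisjoint (univ : Finset (Fin (C i))) fun j => traj π (child l i j) t :=
    fun j _ j' _ hjj' => disjoint_left.mpr fun s hs hs' => hjj' <| Option.some_injective _ <|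
      (traj_branch_eq_some π (child_apply_self l i j) t s hs).symm.trans
        (traj_branch_eq_some π (child_apply_self l i j') t s hs')
  have hchild (j : Fin (C i)) := V_eq_sum_range D lam π (tau_le_q_succ π (child l i j))
  rw [V_eq_sum_range D lam π (tau_le_q_succ π l |>.trans (Nat.le_succ _)), sum_range_succ',
    sum_congr rfl fun t _ => by rw [traj_succ_of_act_eq_some π hact, sum_biUnion (hdisj t)],
    sum_comm, sum_congr rfl fun j _ => (hchild j).symm]
  simp [traj, rew, hact, add_comm]

end Value

section Counts

variable (D : Multiset ((∀ i : Fin q, Fin (C i)) × Fin K))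

lemma inBranch_child_iff {l : Branch q C} {i : Fin q} (h : l i = none) (j : Fin (C i))
    (x : ∀ i : Fin q, Fin (C i)) : inBranch (child l i j) x ↔ inBranch l x ∧ x i = j := by
  constructor
  · intro hx
    refine ⟨fun i' c hc => hx i' c ?_, hx i j (child_apply_self l i j)⟩
    have hi' : i' ≠ i := by rintro rfl; simp [h] at hc
    rwa [child_apply_of_ne l hi']
  · rintro ⟨hx, rfl⟩ i' c hc
    by_cases hi' : i' = i
    · subst hi'; simpa using hc
    · exact hx i' c (by rwa [child_apply_of_ne l hi'] at hc)

lemma sum_nIn_child {l : Branch q C} {i : Fin q} (h : l i = none) :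
    ∑ j : Fin (C i), nIn D (child l i j) = nIn D l := by
  set M := D.filter fun p => inBranch l p.1
  calc ∑ j : Fin (C i), nIn D (child l i j)
      = ∑ j : Fin (C i), (M.map fun p => p.1 i).count j := by
        refine sum_congr rfl fun j _ => ?_
        simp only [nIn, M, Multiset.count_map, Multiset.filter_filter, inBranch_child_iff h,
          eq_comm, and_comm]
    _ = nIn D l := by simp [nIn, M]

lemma Hb_le_nIn_div (l : Branch q C) : Hb D l ≤ (nIn D l : ℝ) / (Multiset.card D : ℝ) := by
  refine div_le_div_of_nonneg_right ?_ (Nat.cast_nonneg _)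
  refine Nat.cast_le.mpr <| Finset.sup_le fun k _ => Multiset.card_le_card ?_
  exact Multiset.monotone_filter_right _ fun p hp => hp.1

end Counts

section Bounds

variable (D : Multiset ((∀ i : Fin q, Fin (C i)) × Fin K)) {lam : ℝ} (π : Policy q C)

lemma V_le_neg_add_nIn_div_of_act_eq_some {l : Branch q C} {i : Fin q}
    (hact : π.act l = some i)
    (hchild : ∀ j, V D lam π (child l i j) ≤ (nIn D (child l i j) : ℝ) / (Multiset.card D : ℝ)) :
    V D lam π l ≤ -lam + (nIn D l : ℝ) / (Multiset.card D : ℝ) := by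
  rw [V_of_act_eq_some D lam π hact, ← sum_nIn_child D (π.valid l i hact), Nat.cast_sum, sum_div]
  gcongr with j
  exact hchild j

lemma V_le_nIn_div (hlam : 0 ≤ lam) (l : Branch q C) :
    V D lam π l ≤ (nIn D l : ℝ) / (Multiset.card D : ℝ) := by
  cases hact : π.act l with
  | none => exact (V_of_act_eq_none D lam π hact).trans_le (Hb_le_nIn_div D l)
  | some i =>
    have hnone := π.valid l i hact
    have := V_le_neg_add_nIn_div_of_act_eq_some D π hact fun j => V_le_nIn_div hlam (child l i j)
    linarith
termination_by q - nsplits l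
decreasing_by
  have := nsplits_child hnone j
  have := nsplits_lt_of_eq_none hnone
  omega

end Bounds

end

theorem purification_bound_init_general {q K : ℕ}
    {C : Fin q → ℕ}
    (D : Multiset ((∀ i : Fin q, Fin (C i)) × Fin K))
    (lam : ℝ) (hlam0 : 0 < lam)
    (l : Branch q C) :
    ((∃ i : Fin q, l i = none) → ∀ π : Policy q C,
        V D lam π l ≤ max (Hb D l) (-lam + (nIn D l : ℝ) / (Multiset.card D : ℝ))) ∧
    ((∀ i : Fin q, l i ≠ none) → ∀ π : Policy q C, V D lam π l = Hb D l) := by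
  refine ⟨fun _ π => ?_, fun hfull π => ?_⟩
  · cases hact : π.act l with
    | none => exact (V_of_act_eq_none D lam π hact).trans_le (le_max_left _ _)
    | some i =>
      refine (V_le_neg_add_nIn_div_of_act_eq_some D π hact fun j => ?_).trans (le_max_right _ _)
      exact V_le_nIn_div D π hlam0.le (child l i j)
  · cases hact : π.act l with
    | none => exact V_of_act_eq_none D lam π hact
    | some i => exact absurd (π.valid l i hact) (hfull i)

/-- **Purification Bound, initialization.** If `l` has an unused feature,
then for every policy `π`, `V^π(l) ≤ max { H(l), -λ + n(l)/n }` (in particular this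
bounds `V*(l)`); if `l` has no unused feature, `V^π(l) = H(l)` for every policy. -/
theorem purification_bound_init {q K : ℕ} (hq : 2 ≤ q) (hK : 2 ≤ K)
    {C : Fin q → ℕ} (hC : ∀ i, 2 ≤ C i)
    (D : Multiset ((∀ i : Fin q, Fin (C i)) × Fin K)) (hD : D ≠ 0)
    (lam : ℝ) (hlam0 : 0 < lam) (hlam1 : lam < 1)
    (l : Branch q C) :
    ((∃ i : Fin q, l i = none) → ∀ π : Policy q C,
        V D lam π l ≤ max (Hb D l) (-lam + (nIn D l : ℝ) / (Multiset.card D : ℝ))) ∧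
    ((∀ i : Fin q, l i ≠ none) → ∀ π : Policy q C, V D lam π l = Hb D l) :=
  purification_bound_init_general D lam hlam0 l
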